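/- Let G be the group with presentation ⟨s₁,s₂,s₃,h | [sₖ,h] for 1≤k≤3, s₁²h, s₂⁴h, s₃⁴h, s₁s₂s₃h⟩. Then there are exactly 3 surjective homomorphisms G → ℤ/2, determined by (φ(s₁),φ(s₂),φ(s₃),φ(h)) ∈ {(1,1,0,0),(1,0,1,0),(0,1,1,0)}. -/

import Mathlib

/-!
A homomorphism from a presented group is the same as an assignment of values to the generators
satisfying the relators, and a homomorphism onto a group of prime order is surjective as soon as
it is nontrivial. In `ℤ/2` the commutator relators hold automatically and `s₁² = 0`, so the
relators reduce to `h = 0` and `s₁ + s₂ + s₃ = 0`: the epimorphisms are the nonzero vectors of a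
2-dimensional subspace of `(ℤ/2)³`, and there are three of them.
-/

open FreeGroup

/-- Relators of π₁(M₄) = ⟨s₁,s₂,s₃,h | [sₖ,h] (1≤k≤3), s₁²h, s₂⁴h, s₃⁴h, s₁s₂s₃h⟩,
generators s₁=0, s₂=1, s₃=2, h=3. -/
def relsM4 : Set (FreeGroup (Fin 4)) :=
  { of 0 * of 3 * (of 0)⁻¹ * (of 3)⁻¹,
    of 1 * of 3 * (of 1)⁻¹ * (of 3)⁻¹,
    of 2 * of 3 * (of 2)⁻¹ * (of 3)⁻¹,
    of 0 ^ 2 * of 3, of 1 ^ 4 * of 3, of 2 ^ 4 * of 3,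
    of 0 * of 1 * of 2 * of 3 }

/-- Reduction mod 2, multiplicatively. -/
def mod2 : Multiplicative ℤ →* Multiplicative (ZMod 2) :=
  AddMonoidHom.toMultiplicative (Int.castAddHom (ZMod 2))

theorem MonoidHom.surjective_iff_ne_one_of_prime_card {G H : Type*} [Group G] [Group H]
    [hp : Fact (Nat.card H).Prime] (φ : G →* H) : Function.Surjective φ ↔ φ ≠ 1 := by
  have : Finite H := Nat.finite_of_card_ne_zero hp.out.ne_zero
  have : Nontrivial H := Finite.one_lt_card_iff_nontrivial.mp hp.out.one_lt
  rw [← range_eq_top, ne_eq, ← range_eq_bot_iff]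
  exact ⟨fun h hb => bot_ne_top (hb.symm.trans h),
    φ.range.eq_bot_or_eq_top_of_prime_card.resolve_left⟩

namespace PresentedGroup

variable {α : Type*} {rels : Set (FreeGroup α)} {G : Type*} [Group G]

theorem lift_comp_of_eq_one (φ : PresentedGroup rels →* G) {r : FreeGroup α} (hr : r ∈ rels) :
    FreeGroup.lift (φ ∘ of) r = 1 := by
  rw [← FreeGroup.lift_unique (f := φ ∘ of) (φ.comp (mk rels)) fun _ => rfl,
    MonoidHom.comp_apply, one_of_mem hr, _root_.map_one]

variable (rels G) in
def homEquiv :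
    (PresentedGroup rels →* G) ≃ {f : α → G // ∀ r ∈ rels, FreeGroup.lift f r = 1} where
  toFun φ := ⟨φ ∘ of, fun _ => lift_comp_of_eq_one φ⟩
  invFun f := toGroup f.2
  left_inv _ := ext fun _ => toGroup.of _
  right_inv _ := Subtype.ext <| funext fun _ => toGroup.of _

theorem comp_of_eq_one_iff (φ : PresentedGroup rels →* G) : φ ∘ of = 1 ↔ φ = 1 :=
  ⟨fun h => ext fun x => congrFun h x, fun h => h ▸ rfl⟩

variable (rels G) in
def surjectiveHomEquiv [Fact (Nat.card G).Prime] :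
    {φ : PresentedGroup rels →* G // Function.Surjective φ} ≃
      {f : α → G // (∀ r ∈ rels, FreeGroup.lift f r = 1) ∧ f ≠ 1} :=
  ((homEquiv rels G).subtypeEquiv fun φ =>
      φ.surjective_iff_ne_one_of_prime_card.trans (comp_of_eq_one_iff φ).not.symm).trans
    (Equiv.subtypeSubtypeEquivSubtypeInter _ (· ≠ 1))

end PresentedGroup

instance : Fact (Nat.card (Multiplicative (ZMod 2))).Prime :=
  ⟨by rw [Nat.card_eq_fintype_card]; decide⟩

theorem relsM4_lift_eq_one_iff (f : Fin 4 → Multiplicative (ZMod 2)) :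
    (∀ r ∈ relsM4, FreeGroup.lift f r = 1) ↔ f 3 = 1 ∧ f 0 * f 1 * f 2 = 1 := by
  simp only [relsM4, Set.forall_mem_insert, forall_eq, Set.mem_singleton_iff, _root_.map_mul,
    _root_.map_inv, _root_.map_pow, FreeGroup.lift_apply_of]
  generalize f 0 = a, f 1 = b, f 2 = c, f 3 = d
  revert a b c d
  decide

/-- There are exactly 3 epimorphisms π₁(M₄) → ℤ/2, with values on (s₁,s₂,s₃,h)
among (1,1,0,0), (1,0,1,0), (0,1,1,0). -/
theorem stmt6 :
    Nat.card {φ : PresentedGroup relsM4 →* Multiplicative (ZMod 2) //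
        Function.Surjective φ} = 3 ∧
    ∀ φ : PresentedGroup relsM4 →* Multiplicative (ZMod 2), Function.Surjective φ →
      (φ (PresentedGroup.of 0), φ (PresentedGroup.of 1), φ (PresentedGroup.of 2),
          φ (PresentedGroup.of 3)) =
            (Multiplicative.ofAdd (1 : ZMod 2), Multiplicative.ofAdd (1 : ZMod 2),
              Multiplicative.ofAdd (0 : ZMod 2), Multiplicative.ofAdd (0 : ZMod 2)) ∨
      (φ (PresentedGroup.of 0), φ (PresentedGroup.of 1), φ (PresentedGroup.of 2),
          φ (PresentedGroup.of 3)) =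
            (Multiplicative.ofAdd (1 : ZMod 2), Multiplicative.ofAdd (0 : ZMod 2),
              Multiplicative.ofAdd (1 : ZMod 2), Multiplicative.ofAdd (0 : ZMod 2)) ∨
      (φ (PresentedGroup.of 0), φ (PresentedGroup.of 1), φ (PresentedGroup.of 2),
          φ (PresentedGroup.of 3)) =
            (Multiplicative.ofAdd (0 : ZMod 2), Multiplicative.ofAdd (1 : ZMod 2),
              Multiplicative.ofAdd (1 : ZMod 2), Multiplicative.ofAdd (0 : ZMod 2)) := by
  let e := (PresentedGroup.surjectiveHomEquiv relsM4 (Multiplicative (ZMod 2))).trans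
    (Equiv.subtypeEquivRight fun f => and_congr_left' (relsM4_lift_eq_one_iff f))
  constructor
  · rw [Nat.card_congr e, Nat.card_eq_fintype_card]
    decide
  · intro φ hφ
    have key : ∀ f : Fin 4 → Multiplicative (ZMod 2), (f 3 = 1 ∧ f 0 * f 1 * f 2 = 1) ∧ f ≠ 1 →
        (f 0, f 1, f 2, f 3) = (.ofAdd 1, .ofAdd 1, .ofAdd 0, .ofAdd 0) ∨
        (f 0, f 1, f 2, f 3) = (.ofAdd 1, .ofAdd 0, .ofAdd 1, .ofAdd 0) ∨
        (f 0, f 1, f 2, f 3) = (.ofAdd 0, .ofAdd 1, .ofAdd 1, .ofAdd 0) := by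
      decide
    exact key _ (e ⟨φ, hφ⟩).2
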